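/- arXiv:2209.13075 — 4 statements merged into one kernel-verified Lean document; each statement's English description precedes it below -/
import Mathlib

section
/- Let μ and ν be probability measures on a measurable space S, and let E ⊆ S be a measurable set with μ(E) ≥ 1 − ε and ν(E) ≥ 1 − ε for some ε ∈ [0, 1/4]. Then the total variation distance between the conditional measures satisfies d_TV(μ|E, ν|E) ≤ (1/(1−ε))·d_TV(μ, ν) + 2ε. -/
open MeasureTheory

/-- Total variation distance between two measures: the supremum over measurable
sets `A` of `|μ(A) - ν(A)|`. -/
noncomputable def tvDist {S : Type*} [MeasurableSpace S] (μ ν : Measure S) : ℝ :=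
  ⨆ A : {A : Set S // MeasurableSet A}, |(μ A.1).toReal - (ν A.1).toReal|

/-- The conditional measure `μ | E`, defined by `(μ|E)(A) = μ(A ∩ E)/μ(E)`. -/
noncomputable def condMeasure {S : Type*} [MeasurableSpace S] (μ : Measure S)
    (E : Set S) : Measure S :=
  (μ E)⁻¹ • μ.restrict E

/-- If `μ(E), ν(E) ≥ 1 - ε` for some `ε ∈ [0, 1/4]`, then
`d_TV(μ|E, ν|E) ≤ (1/(1-ε))·d_TV(μ,ν) + 2ε`. -/
theorem tvDist_cond_le {S : Type*} [MeasurableSpace S]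
    (μ ν : Measure S) [IsProbabilityMeasure μ] [IsProbabilityMeasure ν]
    (E : Set S) (hE : MeasurableSet E) (ε : ℝ) (hε0 : 0 ≤ ε) (hε1 : ε ≤ 1/4)
    (hμE : ENNReal.ofReal (1 - ε) ≤ μ E)
    (hνE : ENNReal.ofReal (1 - ε) ≤ ν E) :
    tvDist (condMeasure μ E) (condMeasure ν E) ≤
      (1 / (1 - ε)) * tvDist μ ν + 2 * ε := by
  have hεpos : (0:ℝ) < 1 - ε := by linarith
  set d := tvDist μ ν with hd
  -- boundedness of the tvDist sup for μ ν
  have hbdd : BddAbove (Set.range fun A : {A : Set S // MeasurableSet A} =>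
      |(μ A.1).toReal - (ν A.1).toReal|) := by
    refine ⟨1, ?_⟩
    rintro x ⟨A, rfl⟩
    have h1 : (μ A.1).toReal ≤ 1 := by
      have := ENNReal.toReal_mono ENNReal.one_ne_top (prob_le_one (μ := μ) (s := A.1))
      simpa using this
    have h2 : (ν A.1).toReal ≤ 1 := by
      have := ENNReal.toReal_mono ENNReal.one_ne_top (prob_le_one (μ := ν) (s := A.1))
      simpa using this
    have h3 : (0:ℝ) ≤ (μ A.1).toReal := ENNReal.toReal_nonneg
    have h4 : (0:ℝ) ≤ (ν A.1).toReal := ENNReal.toReal_nonneg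
    rw [abs_le]; constructor <;> linarith
  have hdA : ∀ A : Set S, MeasurableSet A → |(μ A).toReal - (ν A).toReal| ≤ d := by
    intro A hA
    exact le_ciSup hbdd ⟨A, hA⟩
  have hd0 : 0 ≤ d := le_trans (abs_nonneg _) (hdA ∅ MeasurableSet.empty)
  -- real values of μ E, ν E
  set a := (μ E).toReal with ha_def
  set b := (ν E).toReal with hb_def
  have ha1 : 1 - ε ≤ a := by
    have := ENNReal.toReal_mono (measure_ne_top μ E) hμE
    rwa [ENNReal.toReal_ofReal (le_of_lt hεpos)] at this
  have hb1 : 1 - ε ≤ b := by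
    have := ENNReal.toReal_mono (measure_ne_top ν E) hνE
    rwa [ENNReal.toReal_ofReal (le_of_lt hεpos)] at this
  have ha2 : a ≤ 1 := by
    have := ENNReal.toReal_mono ENNReal.one_ne_top (prob_le_one (μ := μ) (s := E))
    simpa using this
  have hb2 : b ≤ 1 := by
    have := ENNReal.toReal_mono ENNReal.one_ne_top (prob_le_one (μ := ν) (s := E))
    simpa using this
  have ha : (0:ℝ) < a := lt_of_lt_of_le hεpos ha1
  have hb : (0:ℝ) < b := lt_of_lt_of_le hεpos hb1
  have hab : |b - a| ≤ ε := by
    rw [abs_le]; constructor <;> linarith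
  apply ciSup_le
  rintro ⟨A, hA⟩
  set x := (μ (A ∩ E)).toReal with hx_def
  set y := (ν (A ∩ E)).toReal with hy_def
  have hcμ : ((condMeasure μ E) A).toReal = a⁻¹ * x := by
    rw [condMeasure, Measure.smul_apply, Measure.restrict_apply hA, smul_eq_mul,
      ENNReal.toReal_mul, ENNReal.toReal_inv]
  have hcν : ((condMeasure ν E) A).toReal = b⁻¹ * y := by
    rw [condMeasure, Measure.smul_apply, Measure.restrict_apply hA, smul_eq_mul,
      ENNReal.toReal_mul, ENNReal.toReal_inv]
  rw [hcμ, hcν]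
  have hx0 : (0:ℝ) ≤ x := ENNReal.toReal_nonneg
  have hy0 : (0:ℝ) ≤ y := ENNReal.toReal_nonneg
  have hyb : y ≤ b :=
    ENNReal.toReal_mono (measure_ne_top ν E) (measure_mono Set.inter_subset_right)
  have hxy : |x - y| ≤ d := hdA (A ∩ E) (hA.inter hE)
  have key : a⁻¹ * x - b⁻¹ * y = (x - y) / a + y * (b - a) / (a * b) := by
    field_simp
    ring
  rw [key]
  have h1 : |(x - y) / a| ≤ d / (1 - ε) := by
    rw [abs_div, abs_of_pos ha]
    exact div_le_div₀ hd0 hxy hεpos ha1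
  have h2 : |y * (b - a) / (a * b)| ≤ ε / (1 - ε) := by
    rw [abs_div, abs_of_pos (mul_pos ha hb), abs_mul]
    have hnum : |y| * |b - a| ≤ b * ε :=
      mul_le_mul (by rwa [abs_of_nonneg hy0]) hab (abs_nonneg _) (le_of_lt hb)
    have hden : (1 - ε) * b ≤ a * b := by nlinarith
    calc |y| * |b - a| / (a * b) ≤ b * ε / ((1 - ε) * b) :=
          div_le_div₀ (by positivity) hnum (by positivity) hden
      _ = ε / (1 - ε) := by field_simp
  have h3 : ε / (1 - ε) ≤ 2 * ε := by
    rw [div_le_iff₀ hεpos]; nlinarith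
  calc |(x - y) / a + y * (b - a) / (a * b)|
      ≤ |(x - y) / a| + |y * (b - a) / (a * b)| := abs_add_le _ _
    _ ≤ d / (1 - ε) + ε / (1 - ε) := add_le_add h1 h2
    _ ≤ 1 / (1 - ε) * d + 2 * ε := by rw [one_div, inv_mul_eq_div]; linarith
end

section
/- Let μ and ν be probability measures on a measurable space S, and let E ⊆ S be a measurable set with μ(E) ≥ 1 − ε and ν(E) ≥ 1 − ε for some ε ∈ [0, 1/4]. Then d_TV(μ, ν) − 4ε ≤ d_TV(μ|E, ν|E). -/
/-!
`condMeasure μ E` is Mathlib's conditional measure `μ[|E]`. For a probability measure,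
conditioning on `E` moves the mass of every set by at most `μ(Eᶜ) ≤ ε`, so `d_TV(μ, μ|E) ≤ ε`,
and likewise for `ν`. The triangle inequality for `d_TV` then gives the bound with `2ε`,
hence with `4ε`.
-/

open MeasureTheory

open ProbabilityTheory

section

variable {S : Type*} [MeasurableSpace S]

lemma condMeasure_eq_cond (μ : Measure S) (E : Set S) : condMeasure μ E = μ[|E] := rfl

lemma tvDist_nonneg (μ ν : Measure S) : 0 ≤ tvDist μ ν :=
  Real.iSup_nonneg fun _ ↦ abs_nonneg _

lemma tvDist_comm (μ ν : Measure S) : tvDist μ ν = tvDist ν μ := by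
  simp only [tvDist, abs_sub_comm]

lemma tvDist_le_of_forall_le {μ ν : Measure S} {c : ℝ} (hc : 0 ≤ c)
    (h : ∀ A, MeasurableSet A → |μ.real A - ν.real A| ≤ c) : tvDist μ ν ≤ c :=
  Real.iSup_le (fun A ↦ h A.1 A.2) hc

lemma abs_measureReal_sub_le_tvDist (μ ν : Measure S) [IsFiniteMeasure μ] [IsFiniteMeasure ν]
    {A : Set S} (hA : MeasurableSet A) : |μ.real A - ν.real A| ≤ tvDist μ ν := by
  refine le_ciSup (f := fun A : {A : Set S // MeasurableSet A} ↦ |μ.real A.1 - ν.real A.1|)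
    ⟨μ.real .univ + ν.real .univ, ?_⟩ ⟨A, hA⟩
  rintro _ ⟨B, rfl⟩
  calc |μ.real B.1 - ν.real B.1| ≤ |μ.real B.1| + |ν.real B.1| := abs_sub _ _
    _ ≤ μ.real .univ + ν.real .univ := by
      rw [abs_of_nonneg measureReal_nonneg, abs_of_nonneg measureReal_nonneg]
      exact add_le_add (measureReal_mono (Set.subset_univ _)) (measureReal_mono (Set.subset_univ _))

lemma tvDist_triangle (μ ν ρ : Measure S) [IsFiniteMeasure μ] [IsFiniteMeasure ν]
    [IsFiniteMeasure ρ] : tvDist μ ρ ≤ tvDist μ ν + tvDist ν ρ :=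
  tvDist_le_of_forall_le (add_nonneg (tvDist_nonneg μ ν) (tvDist_nonneg ν ρ)) fun _ hA ↦
    (abs_sub_le _ _ _).trans <| add_le_add (abs_measureReal_sub_le_tvDist μ ν hA)
      (abs_measureReal_sub_le_tvDist ν ρ hA)

lemma abs_measureReal_sub_cond_le (μ : Measure S) [IsProbabilityMeasure μ] {E : Set S}
    (hE : MeasurableSet E) (A : Set S) : |μ.real A - μ[|E].real A| ≤ μ.real Eᶜ := by
  set c := μ[|E].real A
  have hc : c * μ.real E = μ.real (E ∩ A) := by
    simp only [c, measureReal_def, ← ENNReal.toReal_mul, cond_mul_eq_inter hE]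
  have hsplit : μ.real (E ∩ A) + μ.real (A \ E) = μ.real A := by
    rw [Set.inter_comm]; exact measureReal_inter_add_sdiff hE
  have hdiff : μ.real (A \ E) ≤ μ.real Eᶜ := measureReal_mono (Set.sdiff_subset_compl A E)
  have hcompl : μ.real Eᶜ = 1 - μ.real E := probReal_compl_eq_one_sub hE
  have hc0 : 0 ≤ c := measureReal_nonneg
  have hc1 : c ≤ 1 := measureReal_le_one
  have hdiff0 : 0 ≤ μ.real (A \ E) := measureReal_nonneg
  have hE1 : μ.real E ≤ 1 := measureReal_le_one
  -- `μ A - μ[A|E] = μ(A \ E) - μ[A|E] μ(Eᶜ)`, a difference of two numbers in `[0, μ(Eᶜ)]`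
  rw [abs_le]
  constructor <;> nlinarith

lemma measureReal_compl_le {μ : Measure S} [IsProbabilityMeasure μ] {E : Set S}
    (hE : MeasurableSet E) {ε : ℝ} (h : ENNReal.ofReal (1 - ε) ≤ μ E) : μ.real Eᶜ ≤ ε := by
  rw [probReal_compl_eq_one_sub hE, sub_le_comm, measureReal_def,
    ← ENNReal.ofReal_le_iff_le_toReal (measure_ne_top μ E)]
  exact h

lemma tvDist_cond_le_s2 (μ : Measure S) [IsProbabilityMeasure μ] {E : Set S}
    (hE : MeasurableSet E) : tvDist μ μ[|E] ≤ μ.real Eᶜ :=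
  tvDist_le_of_forall_le measureReal_nonneg fun A _ ↦ abs_measureReal_sub_cond_le μ hE A

end

theorem tvDist_cond_ge_general {S : Type*} [MeasurableSpace S]
    (μ ν : Measure S) [IsProbabilityMeasure μ] [IsProbabilityMeasure ν]
    (E : Set S) (hE : MeasurableSet E) (ε : ℝ) (hε0 : 0 ≤ ε)
    (hμE : ENNReal.ofReal (1 - ε) ≤ μ E)
    (hνE : ENNReal.ofReal (1 - ε) ≤ ν E) :
    tvDist μ ν - 4 * ε ≤ tvDist (condMeasure μ E) (condMeasure ν E) := by
  rw [condMeasure_eq_cond, condMeasure_eq_cond, sub_le_iff_le_add]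
  calc tvDist μ ν
      ≤ tvDist μ μ[|E] + tvDist μ[|E] ν[|E] + tvDist ν[|E] ν :=
        (tvDist_triangle μ ν[|E] ν).trans (by gcongr; exact tvDist_triangle μ μ[|E] ν[|E])
    _ ≤ ε + tvDist μ[|E] ν[|E] + ε := by
        rw [tvDist_comm ν[|E]]
        gcongr
        · exact (tvDist_cond_le_s2 μ hE).trans (measureReal_compl_le hE hμE)
        · exact (tvDist_cond_le_s2 ν hE).trans (measureReal_compl_le hE hνE)
    _ ≤ tvDist μ[|E] ν[|E] + 4 * ε := by linarith

/-- If `μ(E), ν(E) ≥ 1 - ε` for some `ε ∈ [0, 1/4]`, then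
`d_TV(μ,ν) - 4ε ≤ d_TV(μ|E, ν|E)`. -/
theorem tvDist_cond_ge {S : Type*} [MeasurableSpace S]
    (μ ν : Measure S) [IsProbabilityMeasure μ] [IsProbabilityMeasure ν]
    (E : Set S) (hE : MeasurableSet E) (ε : ℝ) (hε0 : 0 ≤ ε) (hε1 : ε ≤ 1/4)
    (hμE : ENNReal.ofReal (1 - ε) ≤ μ E)
    (hνE : ENNReal.ofReal (1 - ε) ≤ ν E) :
    tvDist μ ν - 4 * ε ≤ tvDist (condMeasure μ E) (condMeasure ν E) :=
  tvDist_cond_ge_general μ ν E hE ε hε0 hμE hνE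
end

section
/- Suppose p = s·2^k, i.e., the coordinates are divided into s blocks with p/s = 2^k. Then there exist vectors x_{i,j} ∈ {0,1}^p for i ∈ {1,…,k}, j ∈ {1,…,s}, with the following property: for every binary array ζ ∈ {0,1}^{k×s} there exists a vector β ∈ R^p supported on at most s coordinates with ‖β‖_∞ ≤ 1 such that ⟨β, x_{i,j}⟩ = ζ_{i,j} for all i, j. In particular, the class of s-sparse linear functions with coordinates bounded by 1 strongly shatters a set of k·s = s·log₂(p/s) points. -/
/-- Strong shattering for sparse linear models: with `p = s·2^k`, there exist binary
vectors `x_{i,j} ∈ {0,1}^p` (for `i < k`, `j < s`) such that for every binary array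
`ζ ∈ {0,1}^{k×s}` there is a vector `β ∈ ℝ^p` supported on at most `s` coordinates
with `‖β‖_∞ ≤ 1` satisfying `⟨β, x_{i,j}⟩ = ζ_{i,j}` for all `i, j`. -/
theorem sparse_linear_strong_shattering (s k p : ℕ) (hs : 1 ≤ s)
    (hp : p = s * 2 ^ k) :
    ∃ x : Fin k → Fin s → (Fin p → ℝ),
      (∀ i j m, x i j m = 0 ∨ x i j m = 1) ∧
      ∀ ζ : Fin k → Fin s → Bool,
        ∃ β : Fin p → ℝ,
          Set.ncard {m : Fin p | β m ≠ 0} ≤ s ∧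
          (∀ m, |β m| ≤ 1) ∧
          ∀ i j, (∑ m : Fin p, β m * x i j m) = if ζ i j then 1 else 0 := by
  -- identify `Fin (2^k)` with `Fin k → Bool`, and `Fin p` with `Fin s × Fin (2^k)`
  let g : (Fin k → Bool) ≃ Fin (2 ^ k) :=
    (Equiv.arrowCongr (Equiv.refl _) finTwoEquiv.symm).trans finFunctionFinEquiv
  let e : Fin p ≃ Fin s × Fin (2 ^ k) := (finCongr hp).trans finProdFinEquiv.symm
  refine ⟨fun i j m => if (e m).1 = j ∧ (g.symm (e m).2) i then 1 else 0, ?_, ?_⟩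
  · intro i j m
    by_cases h : (e m).1 = j ∧ (g.symm (e m).2) i <;> simp [h]
  intro ζ
  refine ⟨fun m => if (e m).2 = g (fun i => ζ i (e m).1) then 1 else 0, ?_, ?_, ?_⟩
  · -- support bound
    have hsub : {m : Fin p | (if (e m).2 = g (fun i => ζ i (e m).1) then (1:ℝ) else 0) ≠ 0}
        ⊆ Set.range (fun j : Fin s => e.symm (j, g (fun i => ζ i j))) := by
      intro m hm
      simp only [Set.mem_setOf_eq, ne_eq, ite_eq_right_iff, one_ne_zero, imp_false,
        not_not] at hm
      refine ⟨(e m).1, ?_⟩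
      have : (( (e m).1, g fun i => ζ i (e m).1) : Fin s × Fin (2^k)) = e m := by
        rw [← hm]
      show e.symm ((e m).1, g fun i => ζ i (e m).1) = m
      rw [this, Equiv.symm_apply_apply]
    calc Set.ncard _ ≤ Set.ncard (Set.range (fun j : Fin s => e.symm (j, g (fun i => ζ i j)))) :=
          Set.ncard_le_ncard hsub (Set.toFinite _)
      _ = Set.ncard ((fun j : Fin s => e.symm (j, g (fun i => ζ i j))) '' Set.univ) := by
          rw [Set.image_univ]
      _ ≤ Set.ncard (Set.univ : Set (Fin s)) := Set.ncard_image_le (Set.toFinite _)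
      _ = s := by simp [Set.ncard_univ]
  · intro m
    by_cases h : (e m).2 = g (fun i => ζ i (e m).1) <;> simp [h]
  · intro i j
    rw [← Equiv.sum_comp e.symm (fun m => _)]
    simp only [Equiv.apply_symm_apply]
    rw [Fintype.sum_prod_type]
    rw [Finset.sum_eq_single j]
    · rw [Finset.sum_eq_single (g (fun i => ζ i j))]
      · simp [Equiv.symm_apply_apply]
      · intro t _ ht
        simp [ht]
      · simp
    · intro j' _ hj'
      apply Finset.sum_eq_zero
      intro t _
      simp [hj']
    · simp
end

section
/- Let ξ* be a probability distribution and for a bounded measurable function h_tr with ‖s·h_tr‖_∞ ≤ 1/4, define the exponentially tilted distribution ξ_s(x) ∝ ξ*(x)·exp(s·h_tr(x)). Then the chi-squared divergence satisfies χ²(ξ_s ‖ ξ*) ≤ exp(4s‖h_tr‖_∞)·s²·E_{ξ*}[h_tr(X)²]. -/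
/-!
Since the tilted density `exp (s h) / Z` has mean one under `ξ`, its χ²-divergence is
`Var (exp (s h)) / Z²`. The variance is at most the second moment about `1`, and
`|exp t - 1| ≤ |t| exp |t|` bounds that moment by `exp (2 s B) s² E[h²]`; finally
`Z ≥ exp (-s B)` bounds `1 / Z²` by `exp (2 s B)`.
-/

open MeasureTheory ProbabilityTheory Real

lemma Real.abs_exp_sub_one_le_mul_exp_abs (x : ℝ) : |exp x - 1| ≤ |x| * exp |x| := by
  rcases le_total 0 x with hx | hx
  · have h : (1 - x) * exp x ≤ 1 := by
      simpa [← exp_add] using mul_le_mul_of_nonneg_right (one_sub_le_exp_neg x) (exp_pos x).le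
    rw [abs_of_nonneg hx, abs_of_nonneg (by linarith [add_one_le_exp x])]
    nlinarith
  · rw [abs_of_nonpos hx, abs_of_nonpos (by linarith [exp_le_one_iff.mpr hx])]
    nlinarith [add_one_le_exp x, one_le_exp (neg_nonneg.mpr hx)]

lemma Real.sq_exp_sub_one_le {x a : ℝ} (hx : |x| ≤ a) : (exp x - 1) ^ 2 ≤ exp (2 * a) * x ^ 2 :=
  calc (exp x - 1) ^ 2 = |exp x - 1| ^ 2 := (sq_abs _).symm
    _ ≤ (|x| * exp |x|) ^ 2 := by gcongr; exact abs_exp_sub_one_le_mul_exp_abs x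
    _ ≤ (|x| * exp a) ^ 2 := by gcongr
    _ = exp (2 * a) * x ^ 2 := by rw [mul_pow, sq_abs, ← exp_nat_mul]; push_cast; ring

section

variable {Ω : Type*} [MeasurableSpace Ω] {μ : Measure Ω}

lemma exp_neg_le_integral_exp [IsProbabilityMeasure μ] {g : Ω → ℝ} {a : ℝ}
    (hg : AEStronglyMeasurable g μ) (hbound : ∀ x, |g x| ≤ a) :
    exp (-a) ≤ ∫ x, exp (g x) ∂μ := by
  have hint : Integrable (fun x ↦ exp (g x)) μ :=
    Integrable.of_bound (continuous_exp.comp_aestronglyMeasurable hg) (exp a) <|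
      .of_forall fun x ↦ by
        rw [norm_of_nonneg (exp_pos _).le]; exact exp_le_exp.2 (abs_le.1 (hbound x)).2
  calc exp (-a) = ∫ _, exp (-a) ∂μ := by simp
    _ ≤ ∫ x, exp (g x) ∂μ :=
      integral_mono (integrable_const _) hint fun x ↦ exp_le_exp.2 (abs_le.1 (hbound x)).1

lemma integral_sq_exp_sub_one_le {g : Ω → ℝ} {a : ℝ} (hg : Integrable (fun x ↦ g x ^ 2) μ)
    (hbound : ∀ x, |g x| ≤ a) :
    ∫ x, (exp (g x) - 1) ^ 2 ∂μ ≤ exp (2 * a) * ∫ x, g x ^ 2 ∂μ := by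
  rw [← integral_const_mul]
  exact integral_mono_of_nonneg (.of_forall fun x ↦ sq_nonneg _) (hg.const_mul _)
    (.of_forall fun x ↦ sq_exp_sub_one_le (hbound x))

lemma integral_sq_div_integral_sub_one {f : Ω → ℝ} (hf : AEMeasurable f μ) (hf0 : μ[f] ≠ 0) :
    ∫ x, (f x / μ[f] - 1) ^ 2 ∂μ = Var[f; μ] / μ[f] ^ 2 := by
  have hmean : ∫ x, f x / μ[f] ∂μ = 1 := by rw [integral_div, div_self hf0]
  calc ∫ x, (f x / μ[f] - 1) ^ 2 ∂μ = Var[fun x ↦ f x / μ[f]; μ] := by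
        rw [variance_eq_integral (hf.div_const _), hmean]
    _ = Var[f; μ] / μ[f] ^ 2 := by
        simp_rw [div_eq_mul_inv, variance_mul_const, inv_pow]

lemma variance_le_integral_sq_sub [IsProbabilityMeasure μ] {f : Ω → ℝ}
    (hf : AEStronglyMeasurable f μ) (c : ℝ) : Var[f; μ] ≤ ∫ x, (f x - c) ^ 2 ∂μ := by
  rw [← variance_sub_const hf c]
  exact variance_le_expectation_sq (hf.sub aestronglyMeasurable_const)

end

theorem tilted_chi_squared_bound_general
    {S : Type*} [MeasurableSpace S] (ξ : Measure S) [IsProbabilityMeasure ξ]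
    (h : S → ℝ) (hmeas : Measurable h)
    (s B : ℝ) (hs : 0 < s)
    (hbound : ∀ x, |h x| ≤ B)
    (Z : ℝ) (hZ : Z = ∫ x, Real.exp (s * h x) ∂ξ) :
    ∫ x, (Real.exp (s * h x) / Z - 1) ^ 2 ∂ξ ≤
      Real.exp (4 * s * B) * s ^ 2 * ∫ x, h x ^ 2 ∂ξ := by
  have hsh : ∀ x, |s * h x| ≤ s * B := fun x ↦ by
    rw [abs_mul, abs_of_pos hs]; exact mul_le_mul_of_nonneg_left (hbound x) hs.le
  have hsh_meas : AEStronglyMeasurable (fun x ↦ s * h x) ξ :=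
    (hmeas.const_mul s).aestronglyMeasurable
  have hsh_sq : Integrable (fun x ↦ (s * h x) ^ 2) ξ :=
    (MemLp.of_bound hsh_meas (s * B) (.of_forall hsh)).integrable_sq
  have hf : AEStronglyMeasurable (fun x ↦ exp (s * h x)) ξ :=
    continuous_exp.comp_aestronglyMeasurable hsh_meas
  have hZ_ge : exp (-(s * B)) ≤ Z := hZ ▸ exp_neg_le_integral_exp hsh_meas hsh
  have hZ_pos : 0 < Z := (exp_pos _).trans_le hZ_ge
  have hZ_inv : Z⁻¹ ≤ exp (s * B) := inv_le_of_inv_le₀ (exp_pos _) (by rwa [← exp_neg])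
  calc ∫ x, (exp (s * h x) / Z - 1) ^ 2 ∂ξ = Var[fun x ↦ exp (s * h x); ξ] / Z ^ 2 := by
        rw [hZ, integral_sq_div_integral_sub_one hf.aemeasurable (hZ ▸ hZ_pos.ne')]
    _ ≤ (∫ x, (exp (s * h x) - 1) ^ 2 ∂ξ) / Z ^ 2 := by
        gcongr; exact variance_le_integral_sq_sub hf 1
    _ ≤ exp (2 * (s * B)) * (∫ x, (s * h x) ^ 2 ∂ξ) * Z⁻¹ ^ 2 := by
        rw [div_eq_mul_inv, inv_pow]; gcongr; exact integral_sq_exp_sub_one_le hsh_sq hsh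
    _ ≤ exp (2 * (s * B)) * (∫ x, (s * h x) ^ 2 ∂ξ) * exp (s * B) ^ 2 := by
        gcongr
    _ = exp (4 * s * B) * s ^ 2 * ∫ x, h x ^ 2 ∂ξ := by
        simp_rw [mul_pow s, integral_const_mul]
        rw [← exp_nat_mul, show 4 * s * B = 2 * (s * B) + (2 : ℕ) * (s * B) by push_cast; ring,
          exp_add]
        ring

/-- Chi-squared divergence bound for an exponentially tilted distribution: if
`‖s·h‖_∞ ≤ 1/4` (with `s > 0` and `|h| ≤ B`, `s·B ≤ 1/4`), then the tilted measure
`ξ_s ∝ ξ*·exp(s·h)` satisfies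
`χ²(ξ_s ‖ ξ*) = Var_{ξ*}(exp(s·h)/Z_s) ≤ exp(4s·B)·s²·E_{ξ*}[h²]`. -/
theorem tilted_chi_squared_bound
    {S : Type*} [MeasurableSpace S] (ξ : Measure S) [IsProbabilityMeasure ξ]
    (h : S → ℝ) (hmeas : Measurable h)
    (s B : ℝ) (hs : 0 < s) (hB : 0 ≤ B)
    (hbound : ∀ x, |h x| ≤ B) (hsB : s * B ≤ 1/4)
    (Z : ℝ) (hZ : Z = ∫ x, Real.exp (s * h x) ∂ξ) :
    ∫ x, (Real.exp (s * h x) / Z - 1) ^ 2 ∂ξ ≤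
      Real.exp (4 * s * B) * s ^ 2 * ∫ x, h x ^ 2 ∂ξ :=
  tilted_chi_squared_bound_general ξ h hmeas s B hs hbound Z hZ
end
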